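/- There exists δ₀ ∈ (0, 1) such that for every δ ∈ (0, δ₀), all a, c ∈ (0, δ²], and all b, b̃ ∈ [0.9, 1] the following hold: (i) ‖p_{a,b} − q_{b,c}‖ < 1, so the closed balls of radius 1/2 centered at p_{a,b} and q_{b,c} intersect; (ii) if |b − b̃| ≥ δ^{1/3}, then ‖p_{a,b} − q_{b̃,c}‖ > 1, so the closed balls of radius 1/2 centered at p_{a,b} and q_{b̃,c} are disjoint. -/

import Mathlib

noncomputable section

/-- The point `p_{a,b} = (1 + a·cos δ − b·sin δ, a·sin δ + b·cos δ, √(1 − b²))` in `ℝ³`. -/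
def pPt (δ a b : ℝ) : EuclideanSpace ℝ (Fin 3) :=
  (WithLp.equiv 2 (Fin 3 → ℝ)).symm
    ![1 + a * Real.cos δ - b * Real.sin δ, a * Real.sin δ + b * Real.cos δ,
      Real.sqrt (1 - b ^ 2)]

/-- The point `q_{b,c} = (−c, b, √(1 − b²))` in `ℝ³`. -/
def qPt (b c : ℝ) : EuclideanSpace ℝ (Fin 3) :=
  (WithLp.equiv 2 (Fin 3 → ℝ)).symm ![-c, b, Real.sqrt (1 - b ^ 2)]

/-! Write `p_{a,b} - q_{b',c} = (x, (b - b') + e, √(1 - b²) - √(1 - b'²))`. For `a, c ≤ δ²`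
the first coordinate `x` lies in `[1 - δ, 1 - δ/4]`, because the rotation by `δ` moves `p`
towards `q` by about `b·δ`, and the error `e = a sin δ + b (cos δ - 1)` is at most `δ²`.
For `b' = b` this gives `‖p - q‖² ≤ (1 - δ/4) + δ⁴ < 1`. If `|b - b'| ≥ t := δ^{1/3}`, then
`‖p - q‖² ≥ (1 - t³)² + (t - t⁶)² > 1`, since the gain `≈ t²` beats the loss `≈ 2t³`. -/

open Real Metric Set

lemma norm_pPt_sub_qPt_sq (δ a b b' c : ℝ) :
    ‖pPt δ a b - qPt b' c‖ ^ 2 =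
      (1 + a * cos δ - b * sin δ + c) ^ 2 + (b - b' + (a * sin δ + b * (cos δ - 1))) ^ 2 +
        (√(1 - b ^ 2) - √(1 - b' ^ 2)) ^ 2 := by
  rw [EuclideanSpace.norm_eq, sq_sqrt (by positivity)]
  simp only [pPt, qPt, Fin.sum_univ_three, WithLp.equiv_symm_apply, PiLp.sub_apply,
    Real.norm_eq_abs, sq_abs]
  simp only [Matrix.cons_val_zero, Matrix.cons_val_one, Matrix.cons_val_two,
    Matrix.head_cons, Matrix.tail_cons]
  ring

lemma abs_mul_sin_add_mul_cos_sub_one_le {δ a b : ℝ} (hδ : 0 ≤ δ) (hδ₁ : δ ≤ 1 / 2)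
    (ha : |a| ≤ δ ^ 2) (hb : |b| ≤ 1) : |a * sin δ + b * (cos δ - 1)| ≤ δ ^ 2 := by
  have hsin : |a * sin δ| ≤ δ ^ 2 * δ := by
    rw [abs_mul]
    exact mul_le_mul ha (abs_sin_le_abs.trans_eq (abs_of_nonneg hδ)) (abs_nonneg _)
      (sq_nonneg δ)
  have hcos : |b * (cos δ - 1)| ≤ 1 * (δ ^ 2 / 2) := by
    rw [abs_mul, abs_of_nonpos (a := cos δ - 1) (by linarith [cos_le_one δ])]
    exact mul_le_mul hb (by linarith [one_sub_sq_div_two_le_cos (x := δ)]) (by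
      linarith [cos_le_one δ]) zero_le_one
  calc |a * sin δ + b * (cos δ - 1)| ≤ |a * sin δ| + |b * (cos δ - 1)| := abs_add_le _ _
    _ ≤ δ ^ 2 * δ + 1 * (δ ^ 2 / 2) := add_le_add hsin hcos
    _ ≤ δ ^ 2 := by nlinarith [sq_nonneg δ]

lemma first_coord_mem_Icc {δ a b c : ℝ} (hδ : 0 < δ) (hδ₁ : δ ≤ 1 / 10)
    (ha : a ∈ Icc 0 (δ ^ 2)) (hb : b ∈ Icc (0.9 : ℝ) 1) (hc : c ∈ Icc 0 (δ ^ 2)) :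
    1 + a * cos δ - b * sin δ + c ∈ Icc (1 - δ) (1 - δ / 4) := by
  obtain ⟨ha₀, ha₁⟩ := ha
  obtain ⟨hb₀, hb₁⟩ := hb
  obtain ⟨hc₀, hc₁⟩ := hc
  have hcos₀ : 0 ≤ cos δ := by nlinarith [one_sub_sq_div_two_le_cos (x := δ)]
  have hsin_gt : δ - δ ^ 3 / 6 < sin δ := sin_gt_sub_cube hδ
  have hsin_le : sin δ ≤ δ := sin_le hδ.le
  have hacos : a * cos δ ≤ δ ^ 2 := (mul_le_of_le_one_right ha₀ (cos_le_one δ)).trans ha₁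
  constructor
  · nlinarith [mul_nonneg ha₀ hcos₀]
  · nlinarith

lemma sq_add_sq_lt_one {δ x e : ℝ} (hδ : 0 < δ) (hδ₁ : δ ≤ 1 / 10)
    (hx : x ∈ Icc (1 - δ) (1 - δ / 4)) (he : |e| ≤ δ ^ 2) : x ^ 2 + e ^ 2 < 1 := by
  obtain ⟨hx₀, hx₁⟩ := hx
  have hx_sq : x ^ 2 ≤ x := by nlinarith
  have he_sq : e ^ 2 ≤ (δ ^ 2) ^ 2 := sq_le_sq' (abs_le.mp he).1 (abs_le.mp he).2
  nlinarith [pow_pos hδ 3]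

lemma one_lt_sq_add_sq {t x d e : ℝ} (ht : 0 < t) (ht₁ : t ≤ 1 / 10)
    (hx : 1 - t ^ 3 ≤ x) (hd : t ≤ |d|) (he : |e| ≤ t ^ 6) : 1 < x ^ 2 + (d + e) ^ 2 := by
  have ht₅ : t ^ 5 ≤ 1 / 10 := by
    calc t ^ 5 ≤ t := pow_le_of_le_one ht.le (by linarith) (by norm_num)
      _ ≤ 1 / 10 := ht₁
  have hde : 9 / 10 * t ≤ |d + e| := by
    have : |d| - |e| ≤ |d + e| := by simpa using abs_sub_abs_le_abs_sub d (-e)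
    nlinarith
  have hx_sq : 1 - 2 * t ^ 3 ≤ x ^ 2 := by nlinarith [pow_pos ht 3]
  have hde_sq : (9 / 10 * t) ^ 2 ≤ (d + e) ^ 2 := by
    rw [← sq_abs (d + e)]
    exact pow_le_pow_left₀ (by positivity) hde 2
  nlinarith [pow_pos ht 2]

lemma norm_pPt_sub_qPt_lt_one {δ a b c : ℝ} (hδ : 0 < δ) (hδ₁ : δ ≤ 1 / 10)
    (ha : a ∈ Icc 0 (δ ^ 2)) (hb : b ∈ Icc (0.9 : ℝ) 1) (hc : c ∈ Icc 0 (δ ^ 2)) :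
    ‖pPt δ a b - qPt b c‖ < 1 := by
  have he := abs_mul_sin_add_mul_cos_sub_one_le hδ.le (by linarith)
    ((abs_of_nonneg ha.1).trans_le ha.2) ((abs_of_nonneg (by linarith [hb.1])).trans_le hb.2)
  have hsq := sq_add_sq_lt_one hδ hδ₁ (first_coord_mem_Icc hδ hδ₁ ha hb hc) he
  rw [← sq_lt_one_iff₀ (norm_nonneg _), norm_pPt_sub_qPt_sq]
  simpa using hsq

lemma one_lt_norm_pPt_sub_qPt {δ a b b' c : ℝ} (hδ : 0 < δ) (hδ₁ : δ ≤ 1 / 1000)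
    (ha : a ∈ Icc 0 (δ ^ 2)) (hb : b ∈ Icc (0.9 : ℝ) 1) (hc : c ∈ Icc 0 (δ ^ 2))
    (hbb : δ ^ ((1 : ℝ) / 3) ≤ |b - b'|) :
    1 < ‖pPt δ a b - qPt b' c‖ := by
  set t := δ ^ ((1 : ℝ) / 3)
  have ht₃ : t ^ 3 = δ := by
    rw [← rpow_natCast, ← rpow_mul hδ.le]
    norm_num
  have ht : 0 < t := rpow_pos_of_pos hδ _
  have ht₁ : t ≤ 1 / 10 :=
    le_of_pow_le_pow_left₀ (n := 3) (by norm_num) (by norm_num) (by rw [ht₃]; linarith)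
  have he : |a * sin δ + b * (cos δ - 1)| ≤ t ^ 6 := by
    rw [show t ^ 6 = δ ^ 2 by rw [← ht₃]; ring]
    exact abs_mul_sin_add_mul_cos_sub_one_le hδ.le (by linarith)
      ((abs_of_nonneg ha.1).trans_le ha.2) ((abs_of_nonneg (by linarith [hb.1])).trans_le hb.2)
  have hx : 1 - t ^ 3 ≤ 1 + a * cos δ - b * sin δ + c := by
    rw [ht₃]; exact (first_coord_mem_Icc hδ (by linarith) ha hb hc).1
  have hsq := one_lt_sq_add_sq ht ht₁ hx hbb he
  rw [← one_lt_sq_iff₀ (norm_nonneg _), norm_pPt_sub_qPt_sq]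
  nlinarith [sq_nonneg (√(1 - b ^ 2) - √(1 - b' ^ 2))]

theorem stmt1 :
    ∃ δ₀ : ℝ, δ₀ ∈ Set.Ioo (0 : ℝ) 1 ∧
      ∀ δ ∈ Set.Ioo (0 : ℝ) δ₀, ∀ a ∈ Set.Ioc (0 : ℝ) (δ ^ 2),
        ∀ c ∈ Set.Ioc (0 : ℝ) (δ ^ 2), ∀ b ∈ Set.Icc (0.9 : ℝ) 1,
          ∀ b' ∈ Set.Icc (0.9 : ℝ) 1,
        (‖pPt δ a b - qPt b c‖ < 1 ∧
          (Metric.closedBall (pPt δ a b) (1 / 2) ∩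
            Metric.closedBall (qPt b c) (1 / 2)).Nonempty) ∧
        (|b - b'| ≥ δ ^ ((1 : ℝ) / 3) →
          ‖pPt δ a b - qPt b' c‖ > 1 ∧
          Disjoint (Metric.closedBall (pPt δ a b) (1 / 2))
            (Metric.closedBall (qPt b' c) (1 / 2))) := by
  refine ⟨1 / 1000, ⟨by norm_num, by norm_num⟩, ?_⟩
  rintro δ ⟨hδ, hδ₁⟩ a ha c hc b hb b' -
  replace ha := Ioc_subset_Icc_self ha
  replace hc := Ioc_subset_Icc_self hc
  have hlt := norm_pPt_sub_qPt_lt_one hδ (by linarith) ha hb hc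
  refine ⟨⟨hlt, ?_⟩, fun hbb => ?_⟩
  · obtain ⟨z, hz₁, hz₂⟩ := exists_dist_le_le (x := pPt δ a b) (z := qPt b c)
      (δ := 1 / 2) (ε := 1 / 2) (by norm_num) (by norm_num) (by rw [dist_eq_norm]; linarith)
    exact ⟨z, mem_closedBall_comm.mp hz₁, hz₂⟩
  · have hgt := one_lt_norm_pPt_sub_qPt hδ hδ₁.le ha hb hc hbb
    exact ⟨hgt, closedBall_disjoint_closedBall (by rw [dist_eq_norm]; linarith)⟩
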